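/- There exists a subset S of the E_6 root system containing exactly one root from each antipodal pair such that the sum of the vectors in S is the zero vector. -/

import Mathlib

/-- The root system `E_6` realized in `ℝ^6`: the union of a copy of `D_5`
(in the span of `ε_1, …, ε_5`) and
`E_6^b = {(√3/2) c_6 ε_6 + (1/2)∑_{i=1}^5 c_i ε_i : c_i ∈ {±1}, ∏ c_i = -1}`. -/
def rootsE6 : Set (Fin 6 → ℝ) :=
  {v | ∃ i j : Fin 5, i < j ∧
    (v = Pi.single (Fin.castSucc i) 1 + Pi.single (Fin.castSucc j) (1 : ℝ) ∨
     v = Pi.single (Fin.castSucc i) 1 - Pi.single (Fin.castSucc j) (1 : ℝ) ∨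
     v = -(Pi.single (Fin.castSucc i) 1 + Pi.single (Fin.castSucc j) (1 : ℝ)) ∨
     v = -(Pi.single (Fin.castSucc i) 1 - Pi.single (Fin.castSucc j) (1 : ℝ)))} ∪
  {v | ∃ c : Fin 6 → ℝ, (∀ i, c i = 1 ∨ c i = -1) ∧ (∏ i, c i) = -1 ∧
    v = (Real.sqrt 3 / 2 * c (Fin.last 5)) • (Pi.single (Fin.last 5) (1 : ℝ) : Fin 6 → ℝ) +
        (1 / 2 : ℝ) • ∑ i : Fin 5, c (Fin.castSucc i) • (Pi.single (Fin.castSucc i) (1 : ℝ) : Fin 6 → ℝ)}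


/-!
Scaling the first five coordinates by `2` and the last by `2 / √3` identifies `E_6` with a set of
integer vectors: the `D_5` roots become `±2ε_i ± 2ε_j` and the roots of `E_6^b` become the sign
vectors `c ∈ {±1}^6` with `∏ c_i = -1`. There we choose, for each `i ∈ ℤ/5`, the four roots
`2(ε_i + ε_{i+1})`, `2(ε_i - ε_{i+1})`, `-2(ε_i + ε_{i+2})`, `2(ε_i - ε_{i+2})`; since every pair
`{i, j}` is `{i, i+1}` or `{i, i+2}` for exactly one `i`, this is one root from each antipodal pair
of `D_5`, and the four sum to `4ε_i - 4ε_{i+2}`, which telescopes to zero over `ℤ/5`. From `E_6^b`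
we choose the `c` with `c_1 c_2 c_3 = 1`, hence `c_4 c_5 c_6 = -1`: negation flips the first
product, and in a set of sign triples with prescribed product every coordinate takes each sign
equally often, so the chosen vectors sum to zero. The scaling map is additive and injective, so
the choice transports back to `E_6`.
-/

section ZeroSumHalf

variable {A B : Type*} [AddCommGroup A] [AddCommGroup B] [DecidableEq B]

def IsZeroSumHalf (R : Set A) (S : Finset A) : Prop :=
  (∀ v ∈ S, v ∈ R) ∧ (∀ v ∈ R, (v ∈ S ↔ -v ∉ S)) ∧ ∑ v ∈ S, v = 0

theorem IsZeroSumHalf.image {R : Set A} {S : Finset A} (h : IsZeroSumHalf R S) {f : A →+ B}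
    (hf : Function.Injective f) : IsZeroSumHalf (f '' R) (S.image f) := by
  obtain ⟨hSR, hneg, hsum⟩ := h
  refine ⟨?_, ?_, ?_⟩
  · rintro _ hv
    obtain ⟨w, hw, rfl⟩ := Finset.mem_image.1 hv
    exact ⟨w, hSR w hw, rfl⟩
  · rintro _ ⟨w, hw, rfl⟩
    rw [← map_neg, hf.mem_finset_image, hf.mem_finset_image]
    exact hneg w hw
  · rw [Finset.sum_image hf.injOn, ← map_sum, hsum, map_zero]

end ZeroSumHalf

theorem exists_intCast_eq_of_forall_eq_one_or_eq_neg_one {ι : Type*} {c : ι → ℝ}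
    (hc : ∀ i, c i = 1 ∨ c i = -1) :
    ∃ n : ι → ℤ, (∀ i, n i = 1 ∨ n i = -1) ∧ (fun i => (n i : ℝ)) = c := by
  have hint : ∀ i, ∃ m : ℤ, (m = 1 ∨ m = -1) ∧ (m : ℝ) = c i := fun i => by
    rcases hc i with h | h
    · exact ⟨1, by simp [h]⟩
    · exact ⟨-1, by simp [h]⟩
  choose n hn hnc using hint
  exact ⟨n, hn, funext hnc⟩

namespace E6

noncomputable def coordScale (k : Fin 6) : ℝ := if k = Fin.last 5 then √3 / 2 else 1 / 2

noncomputable def embed : (Fin 6 → ℤ) →+ (Fin 6 → ℝ) where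
  toFun w k := w k * coordScale k
  map_zero' := by ext; simp
  map_add' _ _ := by ext; simp [add_mul]

theorem embed_apply (w : Fin 6 → ℤ) (k : Fin 6) : embed w k = w k * coordScale k := rfl

theorem castSucc_ne_five (m : Fin 5) : m.castSucc ≠ 5 := Fin.castSucc_ne_last m

theorem embed_injective : Function.Injective embed := by
  intro w w' h
  funext k
  have hk : coordScale k ≠ 0 := by unfold coordScale; split_ifs <;> positivity
  exact_mod_cast mul_right_cancel₀ hk (congrFun h k)

theorem embed_single_two (m : Fin 5) :
    embed (Pi.single m.castSucc 2) = Pi.single m.castSucc 1 := by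
  ext k
  rcases eq_or_ne k m.castSucc with rfl | hk
  · simp [embed_apply, coordScale, castSucc_ne_five]
  · simp [embed_apply, hk]

theorem embed_eq (c : Fin 6 → ℤ) :
    embed c = (√3 / 2 * c (Fin.last 5)) • (Pi.single (Fin.last 5) (1 : ℝ) : Fin 6 → ℝ) +
        (1 / 2 : ℝ) • ∑ i : Fin 5, (c i.castSucc : ℝ) • (Pi.single i.castSucc (1 : ℝ) : Fin 6 → ℝ) := by
  ext k
  induction k using Fin.lastCases with
  | last => simp [embed_apply, coordScale, Finset.sum_apply, (castSucc_ne_five _).symm]; ring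
  | cast m => simp [embed_apply, coordScale, Finset.sum_apply, Pi.single_apply, castSucc_ne_five]; ring

def d5RootsZ : Finset (Fin 6 → ℤ) :=
  ((Finset.univ : Finset (Fin 5 × Fin 5)).filter fun p => p.1 < p.2).biUnion fun p =>
    let x : Fin 6 → ℤ := Pi.single p.1.castSucc 2
    let y : Fin 6 → ℤ := Pi.single p.2.castSucc 2
    {x + y, x - y, -(x + y), -(x - y)}

def spinorRootsZ : Finset (Fin 6 → ℤ) :=
  (Fintype.piFinset fun _ => ({1, -1} : Finset ℤ)).filter fun c => ∏ i, c i = -1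

def rootsZ : Finset (Fin 6 → ℤ) := d5RootsZ ∪ spinorRootsZ

theorem image_embed_rootsZ : embed '' rootsZ = rootsE6 := by
  rw [rootsZ, Finset.coe_union, Set.image_union, rootsE6]
  congr 1
  · ext v
    simp only [d5RootsZ, Finset.coe_biUnion, Set.image_iUnion₂, Finset.coe_insert,
      Finset.coe_singleton, Set.image_insert_eq, Set.image_singleton, map_add, map_sub, map_neg,
      embed_single_two]
    simp
  · ext v
    simp only [spinorRootsZ, Finset.coe_filter, Fintype.mem_piFinset, Finset.mem_insert,
      Finset.mem_singleton, Set.mem_image, Set.mem_ofPred_eq]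
    constructor
    · rintro ⟨c, ⟨hsign, hprod⟩, rfl⟩
      refine ⟨fun i => c i, fun i => ?_, by simp only; exact_mod_cast hprod, embed_eq c⟩
      rcases hsign i with h | h <;> simp [h]
    · rintro ⟨c, hsign, hprod, rfl⟩
      obtain ⟨n, hn, rfl⟩ := exists_intCast_eq_of_forall_eq_one_or_eq_neg_one hsign
      exact ⟨n, ⟨hn, by simp only at hprod; exact_mod_cast hprod⟩, embed_eq n⟩

def halfRootsZ : Finset (Fin 6 → ℤ) :=
  (Finset.univ.biUnion fun i : Fin 5 =>
    let x : Fin 5 → Fin 6 → ℤ := fun k => Pi.single k.castSucc 2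
    {x i + x (i + 1), x i - x (i + 1), -(x i + x (i + 2)), x i - x (i + 2)}) ∪
  spinorRootsZ.filter fun c => c 0 * c 1 * c 2 = 1

theorem isZeroSumHalf_halfRootsZ : IsZeroSumHalf (rootsZ : Set (Fin 6 → ℤ)) halfRootsZ :=
  ⟨by decide +kernel, by decide +kernel, by decide +kernel⟩

end E6

/-- There is a choice of one root from each antipodal pair of `E_6` whose sum
is zero. -/
theorem stmt_10 :
    ∃ S : Finset (Fin 6 → ℝ),
      (∀ v ∈ S, v ∈ rootsE6) ∧
      (∀ v ∈ rootsE6, (v ∈ S ↔ -v ∉ S)) ∧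
      ∑ v ∈ S, v = 0 := by
  have h := E6.isZeroSumHalf_halfRootsZ.image E6.embed_injective
  rw [E6.image_embed_rootsZ] at h
  exact ⟨_, h⟩
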